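/- Let σ, ν, μ be Minkowski velocities with ⟨σ,ν⟩ > 0 and set β := Lp(σ,ν)μ. If the quantity 2⟨μ,σ⟩⟨β,σ⟩/c² − ⟨μ,β⟩ + c² is nonzero, then the boost parameter ν can be recovered from σ, β, μ by the inverse-velocity formula: ν = [(⟨μ,σ⟩ + ⟨β,σ⟩)·(μ − β) + (2⟨β,σ⟩²/c² + ⟨μ,β⟩ − c²)·σ] / (2⟨μ,σ⟩⟨β,σ⟩/c² − ⟨μ,β⟩ + c²). -/

import Mathlib

/-!
By definition `μ - β = l(ν+σ) - (2⟨μ,ν⟩/c²)σ` with `l = ⟨μ,ν+σ⟩/⟨σ,ν+σ⟩`, a genuine quotient since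
`⟨σ,ν+σ⟩ = ⟨σ,ν⟩ + c² > 0`. Pairing with `σ` and using `⟨σ,σ⟩ = c²` gives `⟨β,σ⟩ = ⟨μ,ν⟩`; pairing
with `μ` and using `⟨μ,μ⟩ = c²` then makes the denominator of the formula collapse to `l⟨μ,ν+σ⟩`.
In the numerator the `σ`-components cancel, leaving `l⟨μ,ν+σ⟩ ν`.
-/

noncomputable section

/-- Minkowski bilinear form on ℝ⁴ with signature +−−−. -/
def mink (u v : Fin 4 → ℝ) : ℝ := u 0 * v 0 - u 1 * v 1 - u 2 * v 2 - u 3 * v 3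

/-- Passive covariant Lorentz boost determined by Minkowski velocities σ, ν. -/
def Lp (c : ℝ) (σ ν μ : Fin 4 → ℝ) : Fin 4 → ℝ :=
  μ - (mink μ (ν + σ) / mink σ (ν + σ)) • (ν + σ) + (2 * mink μ ν / c ^ 2) • σ

lemma mink_comm (u v : Fin 4 → ℝ) : mink u v = mink v u := by
  simp only [mink]; ring

lemma mink_add_right (u v w : Fin 4 → ℝ) : mink u (v + w) = mink u v + mink u w := by
  simp only [mink, Pi.add_apply]; ring

lemma sub_Lp (c : ℝ) (σ ν μ : Fin 4 → ℝ) :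
    μ - Lp c σ ν μ = (mink μ (ν + σ) / mink σ (ν + σ)) • (ν + σ) - (2 * mink μ ν / c ^ 2) • σ := by
  rw [Lp]; abel

lemma mink_Lp_left (c : ℝ) (σ ν μ x : Fin 4 → ℝ) :
    mink (Lp c σ ν μ) x = mink μ x - mink μ (ν + σ) / mink σ (ν + σ) * mink (ν + σ) x
      + 2 * mink μ ν / c ^ 2 * mink σ x := by
  simp only [Lp, mink, Pi.add_apply, Pi.sub_apply, Pi.smul_apply, smul_eq_mul]; ring

section Boost

variable {c : ℝ} {σ ν μ : Fin 4 → ℝ}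

lemma mink_Lp_self_right (hc : c ≠ 0) (hσ : mink σ σ = c ^ 2) (hD : mink σ (ν + σ) ≠ 0) :
    mink (Lp c σ ν μ) σ = mink μ ν := by
  rw [mink_Lp_left, mink_comm (ν + σ), mink_add_right μ, hσ]
  rw [mink_add_right, hσ] at hD ⊢
  field_simp
  ring

lemma mink_self_Lp (hμ : mink μ μ = c ^ 2) :
    mink μ (Lp c σ ν μ) = c ^ 2 - mink μ (ν + σ) ^ 2 / mink σ (ν + σ)
      + 2 * mink μ ν * mink μ σ / c ^ 2 := by
  rw [mink_comm, mink_Lp_left, hμ, mink_comm (ν + σ), mink_comm σ μ]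
  ring

lemma inverse_velocity_denominator (hc : c ≠ 0) (hσ : mink σ σ = c ^ 2)
    (hμ : mink μ μ = c ^ 2) (hD : mink σ (ν + σ) ≠ 0) :
    2 * mink μ σ * mink (Lp c σ ν μ) σ / c ^ 2 - mink μ (Lp c σ ν μ) + c ^ 2
      = mink μ (ν + σ) ^ 2 / mink σ (ν + σ) := by
  rw [mink_Lp_self_right hc hσ hD, mink_self_Lp hμ]
  ring

lemma inverse_velocity_numerator (hc : c ≠ 0) (hσ : mink σ σ = c ^ 2)
    (hμ : mink μ μ = c ^ 2) (hD : mink σ (ν + σ) ≠ 0) :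
    (mink μ σ + mink (Lp c σ ν μ) σ) • (μ - Lp c σ ν μ)
        + (2 * mink (Lp c σ ν μ) σ ^ 2 / c ^ 2 + mink μ (Lp c σ ν μ) - c ^ 2) • σ
      = (mink μ (ν + σ) ^ 2 / mink σ (ν + σ)) • ν := by
  rw [mink_Lp_self_right hc hσ hD, mink_self_Lp hμ, sub_Lp, mink_add_right μ]
  match_scalars <;> field_simp <;> ring

end Boost

theorem inverse_velocity_formula_general (c : ℝ) (hc : 0 < c) (σ ν μ : Fin 4 → ℝ)
    (hσ : mink σ σ = c ^ 2) (hμ : mink μ μ = c ^ 2)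
    (hσν : 0 < mink σ ν)
    (β : Fin 4 → ℝ) (hβ : β = Lp c σ ν μ)
    (hden : 2 * mink μ σ * mink β σ / c ^ 2 - mink μ β + c ^ 2 ≠ 0) :
    ν = (2 * mink μ σ * mink β σ / c ^ 2 - mink μ β + c ^ 2)⁻¹ •
        ((mink μ σ + mink β σ) • (μ - β) +
          (2 * (mink β σ) ^ 2 / c ^ 2 + mink μ β - c ^ 2) • σ) := by
  have hD : mink σ (ν + σ) ≠ 0 := by
    rw [mink_add_right, hσ]; positivity
  subst hβ
  rw [inverse_velocity_denominator hc.ne' hσ hμ hD] at hden ⊢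
  rw [inverse_velocity_numerator hc.ne' hσ hμ hD, inv_smul_smul₀ hden]

theorem inverse_velocity_formula (c : ℝ) (hc : 0 < c) (σ ν μ : Fin 4 → ℝ)
    (hσ : mink σ σ = c ^ 2) (hν : mink ν ν = c ^ 2) (hμ : mink μ μ = c ^ 2)
    (hσν : 0 < mink σ ν)
    (β : Fin 4 → ℝ) (hβ : β = Lp c σ ν μ)
    (hden : 2 * mink μ σ * mink β σ / c ^ 2 - mink μ β + c ^ 2 ≠ 0) :
    ν = (2 * mink μ σ * mink β σ / c ^ 2 - mink μ β + c ^ 2)⁻¹ •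
        ((mink μ σ + mink β σ) • (μ - β) +
          (2 * (mink β σ) ^ 2 / c ^ 2 + mink μ β - c ^ 2) • σ) :=
  inverse_velocity_formula_general c hc σ ν μ hσ hμ hσν β hβ hden
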